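/- arXiv:2507.22192 — 4 statements merged into one kernel-verified Lean document; each statement's English description precedes it below -/
import Mathlib

section
/- Let k be a field and F ⊇ k a finite separable field extension. Then the multiplication map F ⊗_k F → F, x ⊗ y ↦ xy, is a split surjection of F-F-bimodules; equivalently, F is a separable F ⊗_k F-algebra. -/
open TensorProduct

open Polynomial in
/-- Universe-polymorphic version of `Algebra.FormallyUnramified.of_isSeparable`. -/
theorem formallyUnramified_of_isSeparable' {K : Type*} {L : Type*} [Field K] [Field L]
    [Algebra K L] [Algebra.IsSeparable K L] : Algebra.FormallyUnramified K L := by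
  rw [Algebra.FormallyUnramified.iff_comp_injective]
  intros B _ _ I hI f₁ f₂ e
  ext x
  have : f₁ x - f₂ x ∈ I := by
    simpa [Ideal.Quotient.mk_eq_mk_iff_sub_mem] using AlgHom.congr_fun e x
  have := Polynomial.eval_add_of_sq_eq_zero ((minpoly K x).map (algebraMap K B)) (f₂ x)
    (f₁ x - f₂ x) (show (f₁ x - f₂ x) ^ 2 ∈ ⊥ from hI ▸ Ideal.pow_mem_pow this 2)
  simp only [add_sub_cancel, eval_map_algebraMap, aeval_algHom_apply, minpoly.aeval, map_zero,
    derivative_map, zero_add] at this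
  rwa [eq_comm, ((isUnit_iff_ne_zero.mpr
    ((Algebra.IsSeparable.isSeparable K x).aeval_derivative_ne_zero
      (minpoly.aeval K x))).map f₂).mul_right_eq_zero, sub_eq_zero] at this

/-- For a finite separable field extension `F ⊇ k`, the multiplication
map `F ⊗[k] F → F`, `x ⊗ y ↦ x * y`, is a split surjection of `F`-`F`-bimodules: there
is a section `s : F → F ⊗[k] F` which is left `F`-linear (for the action on the left
tensor factor), right `F`-linear (i.e. `s (x * y) = s x * (1 ⊗ y)`), and satisfies
`mult ∘ s = id`. -/
theorem stmt2 {k F : Type*} [Field k] [Field F] [Algebra k F]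
    [FiniteDimensional k F] [Algebra.IsSeparable k F] :
    ∃ s : F →ₗ[F] F ⊗[k] F,
      (∀ x y : F, s (x * y) = s x * (1 ⊗ₜ[k] y)) ∧
      (∀ x : F, Algebra.TensorProduct.lmul' (S := F) k (s x) = x) := by
  have hur : Algebra.FormallyUnramified k F := formallyUnramified_of_isSeparable'
  obtain ⟨t, ht1, ht2⟩ :=
    (Algebra.FormallyUnramified.iff_exists_tensorProduct (R := k) (S := F)).mp hur
  have hsmul : ∀ y : F, y • t = (y ⊗ₜ[k] (1 : F)) * t := by
    intro y
    rw [Algebra.smul_def]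
    rfl
  refine ⟨LinearMap.toSpanSingleton F (F ⊗[k] F) t, ?_, ?_⟩
  · intro x y
    have h : y ⊗ₜ[k] (1 : F) * t = (1 : F) ⊗ₜ[k] y * t := by
      have := ht1 y
      rw [sub_mul, sub_eq_zero] at this
      exact this.symm
    simp only [LinearMap.toSpanSingleton_apply]
    rw [mul_smul, hsmul y, h, mul_comm ((1 : F) ⊗ₜ[k] y) t, smul_mul_assoc]
  · intro x
    simp only [LinearMap.toSpanSingleton_apply]
    rw [hsmul x, map_mul, ht2, mul_one, Algebra.TensorProduct.lmul'_apply_tmul, mul_one]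
end

section
/- Let A be a finite-dimensional algebra over a field k. In the category of finite-dimensional A-modules, suppose f_i: X_i → X_{i+1} (1 ≤ i ≤ s−1) are radical morphisms between indecomposable modules with dim X_i ≤ b for all i. If s ≥ 2^b, then the composition f_{s−1} ∘ ⋯ ∘ f_1 = 0. -/
section HS

variable {k A : Type*} [Field k] [Ring A] [Algebra k A]
variable {M N P : Type*}
  [AddCommGroup M] [Module k M] [Module A M] [IsScalarTower k A M]
  [AddCommGroup N] [Module k N] [Module A N] [IsScalarTower k A N]
  [AddCommGroup P] [Module k P] [Module A P] [IsScalarTower k A P]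

noncomputable def HSrank (k : Type*) [Field k] {A : Type*} [Ring A] [Algebra k A]
    {M N : Type*} [AddCommGroup M] [Module k M] [Module A M] [IsScalarTower k A M]
    [AddCommGroup N] [Module k N] [Module A N] [IsScalarTower k A N]
    (u : M →ₗ[A] N) : ℕ :=
  Module.finrank k (LinearMap.range (u.restrictScalars k))

lemma HS_restrict_comp (u : N →ₗ[A] P) (v : M →ₗ[A] N) :
    (u.comp v).restrictScalars k = (u.restrictScalars k).comp (v.restrictScalars k) := rfl

lemma HSrank_comp_le_right [FiniteDimensional k N] (u : N →ₗ[A] P) (v : M →ₗ[A] N) :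
    HSrank k (u.comp v) ≤ HSrank k v := by
  unfold HSrank
  rw [HS_restrict_comp, LinearMap.range_comp]
  exact Submodule.finrank_map_le _ _

lemma HSrank_comp_le_left [FiniteDimensional k P] (u : N →ₗ[A] P) (v : M →ₗ[A] N) :
    HSrank k (u.comp v) ≤ HSrank k u := by
  unfold HSrank
  apply Submodule.finrank_mono
  rw [HS_restrict_comp]
  exact LinearMap.range_comp_le_range _ _

lemma HSrank_le_dim [FiniteDimensional k M] (u : M →ₗ[A] N) :
    HSrank k u ≤ Module.finrank k M := by
  have := LinearMap.finrank_range_add_finrank_ker (u.restrictScalars k)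
  unfold HSrank
  omega

lemma HSrank_eq_zero_iff [FiniteDimensional k N] (u : M →ₗ[A] N) :
    HSrank k u = 0 ↔ u = 0 := by
  unfold HSrank
  rw [Submodule.finrank_eq_zero, LinearMap.range_eq_bot]
  constructor
  · intro h; ext x; exact DFunLike.congr_fun h x
  · intro h; subst h; rfl

end HS

section HS2

variable {k A : Type*} [Field k] [Ring A] [Algebra k A]
variable {M N P : Type*}
  [AddCommGroup M] [Module k M] [Module A M] [IsScalarTower k A M]
  [AddCommGroup N] [Module k N] [Module A N] [IsScalarTower k A N]
  [AddCommGroup P] [Module k P] [Module A P] [IsScalarTower k A P]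

/-- if composing with `u` does not drop the rank of `v`, then `u` is injective on range `v` -/
lemma HS_inj_on_range [FiniteDimensional k N] (u : N →ₗ[A] P) (v : M →ₗ[A] N)
    (h : HSrank k v ≤ HSrank k (u.comp v)) :
    ∀ x ∈ LinearMap.range v, u x = 0 → x = 0 := by
  set u' := (u.restrictScalars k).domRestrict (LinearMap.range (v.restrictScalars k)) with hu'
  have hrn := LinearMap.finrank_range_add_finrank_ker u'
  have hr : LinearMap.range u' = LinearMap.range ((u.comp v).restrictScalars k) := by
    rw [hu', LinearMap.range_domRestrict, HS_restrict_comp, LinearMap.range_comp]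
  have hker : LinearMap.ker u' = ⊥ := by
    have h1 : Module.finrank k (LinearMap.range u')
        = Module.finrank k (LinearMap.range (v.restrictScalars k)) := by
      have h2 : HSrank k (u.comp v) ≤ HSrank k v := HSrank_comp_le_right u v
      have h3 := Submodule.finrank_mono (LinearMap.range_domRestrict_le_range
        (u.restrictScalars k) (LinearMap.range (v.restrictScalars k)))
      unfold HSrank at h2 h
      rw [hr]
      omega
    rw [h1] at hrn
    have : Module.finrank k (LinearMap.ker u') = 0 := by omega
    exact Submodule.finrank_eq_zero.mp this
  intro x hx hux
  obtain ⟨y, hy⟩ := hx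
  have hxmem : x ∈ LinearMap.range (v.restrictScalars k) := ⟨y, hy⟩
  have : (⟨x, hxmem⟩ : LinearMap.range (v.restrictScalars k)) ∈ LinearMap.ker u' := by
    simpa [u', LinearMap.mem_ker] using hux
  rw [hker, Submodule.mem_bot] at this
  exact congrArg Subtype.val this

end HS2

section HS3

variable {k A : Type*} [Field k] [Ring A] [Algebra k A]
variable {N : Type*}
  [AddCommGroup N] [Module k N] [Module A N] [IsScalarTower k A N]

lemma HS_mk_isCompl [FiniteDimensional k N] (p q : Submodule A N)
    (hdisj : ∀ x, x ∈ p → x ∈ q → x = 0)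
    (hdim : Module.finrank k (p.restrictScalars k) + Module.finrank k (q.restrictScalars k)
      = Module.finrank k N) : IsCompl p q := by
  have hinf : (p.restrictScalars k) ⊓ (q.restrictScalars k) = ⊥ := by
    rw [eq_bot_iff]
    intro x hx
    simp only [Submodule.mem_inf, Submodule.restrictScalars_mem] at hx
    simpa using hdisj x hx.1 hx.2
  have hsup : (p.restrictScalars k) ⊔ (q.restrictScalars k) = ⊤ := by
    apply Submodule.eq_top_of_finrank_eq
    have := Submodule.finrank_sup_add_finrank_inf_eq (p.restrictScalars k) (q.restrictScalars k)
    rw [hinf] at this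
    simp only [finrank_bot] at this
    omega
  constructor
  · rw [Submodule.disjoint_def]
    exact hdisj
  · rw [codisjoint_iff, Submodule.eq_top_iff']
    intro x
    have hx : x ∈ (p.restrictScalars k) ⊔ (q.restrictScalars k) := by rw [hsup]; trivial
    obtain ⟨y, hy, z, hz, rfl⟩ := Submodule.mem_sup.mp hx
    exact Submodule.mem_sup.mpr ⟨y, hy, z, hz, rfl⟩

lemma HS_compl_cases (p q : Submodule A N) (h : IsCompl p q)
    (hid : ∀ e : N →ₗ[A] N, e ∘ₗ e = e → e = 0 ∨ e = LinearMap.id)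
    (hp : p ≠ ⊥) : q = ⊥ ∧ p = ⊤ := by
  set e : N →ₗ[A] N := p.subtype ∘ₗ p.projectionOnto q h with he
  have hidem : e ∘ₗ e = e := by
    ext x
    simp [he, Submodule.projectionOnto_apply_left, -Submodule.coe_projectionOnto_apply]
  rcases hid e hidem with h0 | h1
  · exfalso
    obtain ⟨x, hxp, hx0⟩ := Submodule.ne_bot_iff p |>.mp hp
    have : e x = x := by
      simp [he, Submodule.projectionOnto_apply_of_mem_left h hxp, -Submodule.coe_projectionOnto_apply]
    rw [h0] at this
    exact hx0 (by simpa using this.symm)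
  · constructor
    · rw [eq_bot_iff]
      intro x hx
      have : e x = 0 := by
        simp [he, Submodule.projectionOnto_apply_of_mem_right h hx, -Submodule.coe_projectionOnto_apply]
      rw [h1] at this
      simpa using this
    · rw [Submodule.eq_top_iff']
      intro x
      have : e x = x := by rw [h1]; rfl
      rw [← this]
      simp [he]

end HS3

section HS4

variable {k A : Type*} [Field k] [Ring A] [Algebra k A]
variable (X : ℕ → Type*) [∀ i, AddCommGroup (X i)] [∀ i, Module k (X i)]
  [∀ i, Module A (X i)] [∀ i, IsScalarTower k A (X i)]

def HScomp (f : ∀ i, X i →ₗ[A] X (i+1)) (i : ℕ) : ∀ m, X i →ₗ[A] X (i + m)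
  | 0 => LinearMap.id
  | (m+1) => (f (i+m)).comp (HScomp f i m)

/-- transport along equality of indices -/
def HSec : ∀ {n m : ℕ}, n = m → (X n ≃ₗ[A] X m)
  | n, _, rfl => LinearEquiv.refl A (X n)

variable (f : ∀ i, X i →ₗ[A] X (i+1))

lemma HS_heq_congr {n n'} (h : n = n') {a : X n} {b : X n'} (hab : HEq a b) :
    HEq (f n a) (f n' b) := by
  subst h
  rw [eq_of_heq hab]

lemma HScomp_split (i m1 : ℕ) : ∀ m2 (x : X i),
    HEq (HScomp X f i (m1 + m2) x) (HScomp X f (i+m1) m2 (HScomp X f i m1 x))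
  | 0, x => HEq.rfl
  | (m2+1), x => by
    show HEq (f (i+(m1+m2)) (HScomp X f i (m1+m2) x))
      (f ((i+m1)+m2) (HScomp X f (i+m1) m2 (HScomp X f i m1 x)))
    exact HS_heq_congr X f (by omega) (HScomp_split i m1 m2 x)

lemma HS_eqcast {c n n'} (h : n' = n) (u : X c →ₗ[A] X n') (v : X c →ₗ[A] X n)
    (hx : ∀ x, HEq (u x) (v x)) : v = (HSec X h).toLinearMap ∘ₗ u := by
  subst h
  ext x
  exact (eq_of_heq (hx x)).symm

lemma HSrank_ec_comp {c n n'} (h : n' = n) (u : X c →ₗ[A] X n') :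
    HSrank k ((HSec X h).toLinearMap ∘ₗ u) = HSrank k u := by
  subst h
  rfl

lemma HScomp_zero_ext (i m : ℕ) (h : HScomp X f i m = 0) :
    ∀ d, HScomp X f i (m + d) = 0
  | 0 => h
  | (d+1) => by
    show (f (i+(m+d))).comp (HScomp X f i (m+d)) = 0
    rw [HScomp_zero_ext i m h d]
    simp

end HS4

section HS5

variable {k A : Type*} [Field k] [Ring A] [Algebra k A]
variable (X : ℕ → Type*) [∀ i, AddCommGroup (X i)] [∀ i, Module k (X i)]
  [∀ i, Module A (X i)] [∀ i, IsScalarTower k A (X i)]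

lemma HS_range_restrict {M N : Type*}
    [AddCommGroup M] [Module k M] [Module A M] [IsScalarTower k A M]
    [AddCommGroup N] [Module k N] [Module A N] [IsScalarTower k A N]
    (v : M →ₗ[A] N) :
    (LinearMap.range v).restrictScalars k = LinearMap.range (v.restrictScalars k) := by
  ext x; simp [LinearMap.mem_range]

lemma HS_key (b s : ℕ)
    (hfd : ∀ i, i < s → FiniteDimensional k (X i))
    (hdim : ∀ i, i < s → Module.finrank k (X i) ≤ b)
    (hindec : ∀ i, i < s → (Nontrivial (X i) ∧
      ∀ e : X i →ₗ[A] X i, e ∘ₗ e = e → e = 0 ∨ e = LinearMap.id))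
    (f : ∀ i, X i →ₗ[A] X (i + 1))
    (hrad : ∀ i, i + 1 < s → ¬ Function.Bijective (f i)) :
    ∀ j i, i + (2^j - 1) < s → HSrank k (HScomp X f i (2^j - 1)) ≤ b - j := by
  intro j
  induction j with
  | zero =>
    intro i hlt
    have hp : (2:ℕ)^0 - 1 = 0 := rfl
    rw [hp] at hlt ⊢
    haveI := hfd i (by omega)
    have h1 := HSrank_le_dim (k := k) (HScomp X f i 0)
    have h2 := hdim i (by omega)
    omega
  | succ j ih =>
    intro i hlt
    have hm1 : 1 ≤ 2^j := Nat.one_le_two_pow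
    set m1 := 2^j - 1 with hm1def
    have hM : 2^(j+1) - 1 = m1 + (1 + m1) := by
      have : 2^(j+1) = 2^j * 2 := pow_succ 2 j
      omega
    rw [hM] at hlt ⊢
    -- finite dimensionality of everything in sight
    haveI := hfd i (by omega)
    haveI := hfd (i+m1) (by omega)
    haveI := hfd ((i+m1)+1) (by omega)
    haveI := hfd (((i+m1)+1)+m1) (by omega)
    set gg := HScomp X f i m1 with hgg
    set ff := f (i+m1) with hff
    set hh := HScomp X f ((i+m1)+1) m1 with hhh
    set T : X i →ₗ[A] X (((i+m1)+1)+m1) := hh ∘ₗ (ff ∘ₗ gg) with hT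
    -- the composite agrees with T up to cast
    have hheq : ∀ x, HEq (T x) (HScomp X f i (m1+(1+m1)) x) := by
      intro x
      have h1 := HScomp_split X f i m1 (1+m1) x
      have h2 := HScomp_split X f (i+m1) 1 m1 (HScomp X f i m1 x)
      have h3 : HScomp X f (i+m1) 1 (HScomp X f i m1 x) = ff (gg x) := rfl
      rw [h3] at h2
      exact ((h1.trans h2).symm : HEq _ _)
    have hidx : ((i+m1)+1)+m1 = i + (m1+(1+m1)) := by omega
    have hfact : HScomp X f i (m1+(1+m1)) = (HSec X hidx).toLinearMap ∘ₗ T :=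
      HS_eqcast X hidx T _ hheq
    have hrank_eq : HSrank k (HScomp X f i (m1+(1+m1))) = HSrank k T := by
      rw [hfact, HSrank_ec_comp]
    rw [hrank_eq]
    -- induction hypothesis bounds
    have rkgg : HSrank k gg ≤ b - j := ih i (by omega)
    have rkhh : HSrank k hh ≤ b - j := ih ((i+m1)+1) (by omega)
    by_cases hbj : b ≤ j
    · -- then gg = 0 already
      have : HSrank k gg = 0 := by omega
      have hgg0 : gg = 0 := (HSrank_eq_zero_iff gg).mp this
      have hT0 : T = 0 := by rw [hT, hgg0]; simp
      rw [hT0, (HSrank_eq_zero_iff (0 : X i →ₗ[A] X (((i+m1)+1)+m1))).mpr rfl]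
      omega
    · push_neg at hbj
      by_contra hc
      push_neg at hc
      have hTge : b - j ≤ HSrank k T := by omega
      have t1 : HSrank k T ≤ HSrank k (ff ∘ₗ gg) := HSrank_comp_le_right hh (ff ∘ₗ gg)
      have t2 : HSrank k (ff ∘ₗ gg) ≤ HSrank k gg := HSrank_comp_le_right ff gg
      have hTassoc : (hh ∘ₗ ff) ∘ₗ gg = T := by rw [hT, LinearMap.comp_assoc]
      have t3 : HSrank k T ≤ HSrank k (hh ∘ₗ ff) := by
        rw [← hTassoc]; exact HSrank_comp_le_left (hh ∘ₗ ff) gg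
      have t4 : HSrank k (hh ∘ₗ ff) ≤ HSrank k hh := HSrank_comp_le_left hh ff
      have egg : HSrank k gg = b - j := by omega
      have efg : HSrank k (ff ∘ₗ gg) = b - j := by omega
      have ehf : HSrank k (hh ∘ₗ ff) = b - j := by omega
      have eT : HSrank k T = b - j := by omega
      -- Y-side
      have inj1 : ∀ x ∈ LinearMap.range gg, (hh ∘ₗ ff) x = 0 → x = 0 := by
        apply HS_inj_on_range (k := k)
        rw [hTassoc]; omega
      have dim1 : Module.finrank k ((LinearMap.range gg).restrictScalars k)
          + Module.finrank k ((LinearMap.ker (hh ∘ₗ ff)).restrictScalars k)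
          = Module.finrank k (X (i+m1)) := by
        have hrn := LinearMap.finrank_range_add_finrank_ker ((hh ∘ₗ ff).restrictScalars k)
        rw [HS_range_restrict (k := k), ← LinearMap.ker_restrictScalars]
        have h5 : Module.finrank k ↥(LinearMap.range ((hh ∘ₗ ff).restrictScalars k)) = b - j := ehf
        have h6 : Module.finrank k ↥(LinearMap.range (gg.restrictScalars k)) = b - j := egg
        omega
      have compl1 : IsCompl (LinearMap.range gg) (LinearMap.ker (hh ∘ₗ ff)) :=
        HS_mk_isCompl _ _ (fun x hx hk => inj1 x hx hk) dim1
      have ne1 : LinearMap.range gg ≠ ⊥ := by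
        intro hbot
        have : HSrank k gg = 0 := by
          unfold HSrank
          rw [← HS_range_restrict (k := k), hbot]
          exact Submodule.finrank_eq_zero.mpr (Submodule.restrictScalars_bot _ _ _)
        omega
      obtain ⟨hK1, -⟩ := HS_compl_cases _ _ compl1 (hindec (i+m1) (by omega)).2 ne1
      have hffinj : Function.Injective ff := by
        rw [← LinearMap.ker_eq_bot (M := X (i+m1))]
        rw [eq_bot_iff]
        intro x hx
        have : x ∈ LinearMap.ker (hh ∘ₗ ff) := by
          simp only [LinearMap.mem_ker, LinearMap.comp_apply] at *
          rw [hx]; simp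
        rw [hK1] at this
        exact this
      -- Z-side
      have inj2 : ∀ x ∈ LinearMap.range (ff ∘ₗ gg), hh x = 0 → x = 0 := by
        apply HS_inj_on_range (k := k)
        have : hh ∘ₗ (ff ∘ₗ gg) = T := rfl
        rw [this]; omega
      have dim2 : Module.finrank k ((LinearMap.range (ff ∘ₗ gg)).restrictScalars k)
          + Module.finrank k ((LinearMap.ker hh).restrictScalars k)
          = Module.finrank k (X ((i+m1)+1)) := by
        have hrn := LinearMap.finrank_range_add_finrank_ker (hh.restrictScalars k)
        rw [HS_range_restrict (k := k), ← LinearMap.ker_restrictScalars]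
        have h5 : HSrank k hh = b - j := by omega
        have h5' : Module.finrank k ↥(LinearMap.range (hh.restrictScalars k)) = b - j := h5
        have h6 : Module.finrank k ↥(LinearMap.range ((ff ∘ₗ gg).restrictScalars k)) = b - j := efg
        omega
      have compl2 : IsCompl (LinearMap.range (ff ∘ₗ gg)) (LinearMap.ker hh) :=
        HS_mk_isCompl _ _ (fun x hx hk => inj2 x hx hk) dim2
      have ne2 : LinearMap.range (ff ∘ₗ gg) ≠ ⊥ := by
        intro hbot
        have : HSrank k (ff ∘ₗ gg) = 0 := by
          unfold HSrank
          rw [← HS_range_restrict (k := k), hbot]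
          exact Submodule.finrank_eq_zero.mpr (Submodule.restrictScalars_bot _ _ _)
        omega
      obtain ⟨-, hS2⟩ := HS_compl_cases _ _ compl2 (hindec ((i+m1)+1) (by omega)).2 ne2
      have hffsurj : Function.Surjective ff := by
        intro z
        have : z ∈ LinearMap.range (ff ∘ₗ gg) := by rw [hS2]; trivial
        obtain ⟨x, hx⟩ := this
        exact ⟨gg x, hx⟩
      exact hrad (i+m1) (by omega) ⟨hffinj, hffsurj⟩

end HS5


/-- **Harada–Sai.** Let `A` be a finite-dimensional algebra over a field
`k` and let `f i : X i → X (i+1)` be radical morphisms (non-isomorphisms) between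
indecomposable finite-dimensional `A`-modules of dimension at most `b`, for
`i = 0, …, s-2`.  If `s ≥ 2^b`, then the composite `f (s-2) ∘ ⋯ ∘ f 0` (recorded by
the partial composites `g`) is zero. -/
theorem stmt12 {k A : Type*} [Field k] [Ring A] [Algebra k A] [FiniteDimensional k A]
    (X : ℕ → Type*) [∀ i, AddCommGroup (X i)] [∀ i, Module k (X i)]
    [∀ i, Module A (X i)] [∀ i, IsScalarTower k A (X i)]
    (b s : ℕ)
    (hfd : ∀ i, i < s → FiniteDimensional k (X i))
    (hdim : ∀ i, i < s → Module.finrank k (X i) ≤ b)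
    (hindec : ∀ i, i < s → (Nontrivial (X i) ∧
      ∀ e : X i →ₗ[A] X i, e ∘ₗ e = e → e = 0 ∨ e = LinearMap.id))
    (f : ∀ i, X i →ₗ[A] X (i + 1))
    (hrad : ∀ i, i + 1 < s → ¬ Function.Bijective (f i))
    (g : ∀ i, X 0 →ₗ[A] X i)
    (hg0 : g 0 = LinearMap.id)
    (hgsucc : ∀ i, g (i + 1) = (f i).comp (g i))
    (hs : 2 ^ b ≤ s) (hs1 : 1 ≤ s) :
    g (s - 1) = 0 := by
  have hb1 : 1 ≤ 2 ^ b := Nat.one_le_two_pow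
  -- key rank bound at j = b
  have hkey := HS_key X b s hfd hdim hindec f hrad b 0 (by omega)
  have hzero : HScomp X f 0 (2 ^ b - 1) = 0 := by
    haveI := hfd (0 + (2 ^ b - 1)) (by omega)
    apply (HSrank_eq_zero_iff (k := k) (HScomp X f 0 (2 ^ b - 1))).mp
    omega
  -- propagate to length s - 1
  obtain ⟨d, hd⟩ : ∃ d, s - 1 = (2 ^ b - 1) + d := ⟨s - 1 - (2 ^ b - 1), by omega⟩
  have hz : HScomp X f 0 (s - 1) = 0 := by
    rw [hd]
    exact HScomp_zero_ext X f 0 (2 ^ b - 1) hzero d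
  -- relate g to the composite
  have gcomp : ∀ m, g (0 + m) = (HScomp X f 0 m).comp (g 0) := by
    intro m
    induction m with
    | zero => simp [HScomp, hg0]
    | succ m ih =>
      have h1 : g ((0 + m) + 1) = (f (0 + m)).comp (g (0 + m)) := hgsucc (0 + m)
      show g ((0 + m) + 1) = _
      rw [h1, ih]
      rfl
  have hfin : g (0 + (s - 1)) = 0 := by
    rw [gcomp (s - 1), hz]
    simp
  rw [Nat.zero_add] at hfin
  exact hfin
end

section
/- Let A be a finite-dimensional algebra over a field k, L ⊇ k a field extension, and X an indecomposable finite-dimensional A-module. If X₁, …, X_n are finite-dimensional A ⊗_k L-modules such that X ⊗_k L ≅ ⊕_{i=1}^n X_i^{t_i}, then X is isomorphic to a direct summand of the restriction of scalars r(X_i) for some i. -/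
open TensorProduct

/-- Fitting's lemma consequence: every `A`-endomorphism of a finite-dimensional
indecomposable module is a unit or nilpotent. -/
theorem aux_isUnit_or_isNilpotent {k A : Type*} [Field k] [Ring A] [Algebra k A]
    {X : Type*} [AddCommGroup X] [Module k X] [Module A X] [IsScalarTower k A X]
    [FiniteDimensional k X]
    (hXindec : ∀ e : X →ₗ[A] X, e ∘ₗ e = e → e = 0 ∨ e = LinearMap.id)
    (φ : Module.End A X) : IsUnit φ ∨ IsNilpotent φ := by
  have hN : IsNoetherian A X := isNoetherian_of_tower k inferInstance
  have hA : IsArtinian A X := isArtinian_of_tower k inferInstance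
  obtain ⟨n, hn⟩ := Filter.eventually_atTop.mp φ.eventually_isCompl_ker_pow_range_pow
  have hc : IsCompl (LinearMap.ker (φ ^ (n + 1))) (LinearMap.range (φ ^ (n + 1))) :=
    hn (n + 1) (Nat.le_succ n)
  set K := LinearMap.ker (φ ^ (n + 1))
  set R := LinearMap.range (φ ^ (n + 1))
  set pr : X →ₗ[A] K := K.projectionOnto R hc
  set E : X →ₗ[A] X := K.subtype ∘ₗ pr with hE
  have hidem : E ∘ₗ E = E := by
    ext x
    simp only [hE, LinearMap.comp_apply, Submodule.coe_subtype]
    rw [Submodule.projectionOnto_apply_left hc (pr x)]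
  rcases hXindec E hidem with h0 | h1
  · -- E = 0 : kernel of φ^(n+1) is trivial, so φ is injective, hence a unit
    left
    have hker : ∀ x : X, (φ ^ (n + 1)) x = 0 → x = 0 := by
      intro x hx
      have hxK : x ∈ K := hx
      have : E x = x := by
        simp only [hE, LinearMap.comp_apply, Submodule.coe_subtype]
        rw [Submodule.projectionOnto_apply_left hc ⟨x, hxK⟩]
      rw [h0] at this
      simpa using this.symm
    have hinj : Function.Injective φ := by
      intro x y hxy
      have hz : (φ ^ (n + 1)) (x - y) = 0 := by
        have hφ : φ (x - y) = 0 := by rw [map_sub, hxy, sub_self]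
        rw [pow_succ, Module.End.mul_apply, hφ, map_zero]
      exact sub_eq_zero.mp (hker _ hz)
    have hinjk : Function.Injective (φ.restrictScalars k) := hinj
    have hsurj : Function.Surjective (φ.restrictScalars k) :=
      (LinearMap.injective_iff_surjective (f := φ.restrictScalars k)).mp hinjk
    exact (Module.End.isUnit_iff φ).mpr ⟨hinj, hsurj⟩
  · -- E = id : range of φ^(n+1) is trivial, so φ is nilpotent
    right
    refine ⟨n + 1, ?_⟩
    ext x
    have hx : (φ ^ (n + 1)) x ∈ R := LinearMap.mem_range_self _ x
    have hEx : E ((φ ^ (n + 1)) x) = 0 := by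
      simp only [hE, LinearMap.comp_apply, Submodule.coe_subtype]
      rw [Submodule.projectionOnto_apply_right hc ⟨_, hx⟩]
      simp
    rw [h1] at hEx
    simpa using hEx

/-- If the identity of an indecomposable module `X` is a finite sum of maps factoring
through modules `M j`, then it factors through one of them. -/
theorem aux_summand {k A : Type*} [Field k] [Ring A] [Algebra k A]
    {X : Type*} [AddCommGroup X] [Module k X] [Module A X] [IsScalarTower k A X]
    [FiniteDimensional k X]
    (hXnt : Nontrivial X)
    (hXindec : ∀ e : X →ₗ[A] X, e ∘ₗ e = e → e = 0 ∨ e = LinearMap.id)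
    {ι : Type*} {M : ι → Type*} [∀ j, AddCommGroup (M j)] [∀ j, Module A (M j)]
    (s : ∀ j, X →ₗ[A] M j) :
    ∀ (S : Finset ι) (p : ∀ j, M j →ₗ[A] X),
      (∑ j ∈ S, (p j) ∘ₗ (s j)) = LinearMap.id →
      ∃ j ∈ S, ∃ p' : M j →ₗ[A] X, p' ∘ₗ s j = LinearMap.id := by
  intro S
  induction S using Finset.cons_induction with
  | empty =>
    intro p hp
    exfalso
    rw [Finset.sum_empty] at hp
    obtain ⟨x, y, hxy⟩ := hXnt
    apply hxy
    have hx : x = 0 := by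
      have := congrArg (fun f : X →ₗ[A] X => f x) hp
      simpa using this.symm
    have hy : y = 0 := by
      have := congrArg (fun f : X →ₗ[A] X => f y) hp
      simpa using this.symm
    rw [hx, hy]
  | cons j₀ S' hj₀ ih =>
    intro p hp
    rw [Finset.sum_cons] at hp
    set g : Module.End A X := (p j₀) ∘ₗ (s j₀) with hg
    rcases aux_isUnit_or_isNilpotent (k := k) hXindec g with hu | hnil
    · obtain ⟨u, hu⟩ := hu
      refine ⟨j₀, Finset.mem_cons_self _ _, (↑u⁻¹ : Module.End A X) ∘ₗ p j₀, ?_⟩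
      have h1 : (↑u⁻¹ : Module.End A X) * g = 1 := by rw [← hu]; exact u.inv_mul
      calc ((↑u⁻¹ : Module.End A X) ∘ₗ p j₀) ∘ₗ s j₀
          = (↑u⁻¹ : Module.End A X) * g := by
            rw [hg, LinearMap.comp_assoc]; rfl
        _ = 1 := h1
        _ = LinearMap.id := rfl
    · have hvu : IsUnit ((1 : Module.End A X) - g) := hnil.isUnit_one_sub
      obtain ⟨v, hv⟩ := hvu
      have hsum : (∑ j ∈ S', (p j) ∘ₗ (s j)) = (v : Module.End A X) := by
        rw [hv]
        have h2 : (∑ j ∈ S', (p j) ∘ₗ (s j)) = LinearMap.id - g := by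
          rw [← hp]; abel
        rw [h2]; rfl
      have hsum2 : (∑ j ∈ S', ((↑v⁻¹ : Module.End A X) ∘ₗ p j) ∘ₗ (s j)) = LinearMap.id := by
        have h3 : (∑ j ∈ S', ((↑v⁻¹ : Module.End A X) ∘ₗ p j) ∘ₗ (s j))
            = (↑v⁻¹ : Module.End A X) * (∑ j ∈ S', (p j) ∘ₗ (s j)) := by
          rw [Finset.mul_sum]
          refine Finset.sum_congr rfl fun j _ => ?_
          show ((↑v⁻¹ : Module.End A X) ∘ₗ p j) ∘ₗ (s j)
              = (↑v⁻¹ : Module.End A X) ∘ₗ ((p j) ∘ₗ (s j))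
          rw [LinearMap.comp_assoc]
        rw [h3, hsum]
        exact v.inv_mul
      obtain ⟨j, hjS, p', hp'⟩ := ih (fun j => (↑v⁻¹ : Module.End A X) ∘ₗ p j) hsum2
      exact ⟨j, Finset.mem_cons_of_mem hjS, p', hp'⟩

/-- Let `A` be a finite-dimensional algebra over a field `k`, `L ⊇ k`
a field extension, and `X` an indecomposable finite-dimensional `A`-module.  If
`X₁, …, X_m` are finite-dimensional `A ⊗[k] L`-modules (encoded as modules with
commuting `A`- and `L`-actions) with `X ⊗[k] L ≅ ⊕ᵢ Xᵢ^{tᵢ}` as `A ⊗[k] L`-modules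
(an `A`-linear equivalence commuting with the `L`-actions), then `X` is a direct
summand of the restriction of scalars `r(Xᵢ)` (that is, `Xᵢ` with its `A`-action) for
some `i`. -/
theorem stmt13 {k A L : Type*} [Field k] [Ring A] [Algebra k A]
    [FiniteDimensional k A] [Field L] [Algebra k L]
    (X : Type*) [AddCommGroup X] [Module k X] [Module A X] [IsScalarTower k A X]
    [SMulCommClass k A X] [FiniteDimensional k X]
    (hXnt : Nontrivial X)
    (hXindec : ∀ e : X →ₗ[A] X, e ∘ₗ e = e → e = 0 ∨ e = LinearMap.id)
    (m : ℕ) (Xi : Fin m → Type*)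
    [∀ i, AddCommGroup (Xi i)] [∀ i, Module k (Xi i)] [∀ i, Module A (Xi i)]
    [∀ i, Module L (Xi i)] [∀ i, IsScalarTower k A (Xi i)]
    [∀ i, IsScalarTower k L (Xi i)] [∀ i, SMulCommClass A L (Xi i)]
    [∀ i, FiniteDimensional L (Xi i)]
    (t : Fin m → ℕ)
    (e : (X ⊗[k] L) ≃ₗ[A] (∀ i, Fin (t i) → Xi i))
    (he : ∀ (c : L) (z : X ⊗[k] L),
      e (LinearMap.lTensor X (LinearMap.mulLeft k c) z) = c • e z) :
    ∃ i, ∃ (s : X →ₗ[A] Xi i) (p : Xi i →ₗ[A] X), p.comp s = LinearMap.id := by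
  classical
  -- a k-linear retraction of the inclusion k → L
  obtain ⟨f, hf⟩ := (Algebra.linearMap k L).exists_leftInverse_of_injective
    (by rw [LinearMap.ker_eq_bot]; exact (algebraMap k L).injective)
  have hf1 : f 1 = 1 := by
    have := congrArg (fun g : k →ₗ[k] k => g 1) hf
    simpa using this
  -- the A-linear retraction q : X ⊗ L → X and section ι' : X → X ⊗ L
  let qk : X ⊗[k] L →ₗ[k] X := TensorProduct.lift (((LinearMap.lsmul k X).comp f).flip)
  have qk_tmul : ∀ (x : X) (c : L), qk (x ⊗ₜ[k] c) = f c • x := fun x c => rfl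
  let q : X ⊗[k] L →ₗ[A] X :=
    { toFun := qk
      map_add' := qk.map_add
      map_smul' := by
        intro a z
        simp only [RingHom.id_apply]
        induction z with
        | zero => rw [smul_zero, map_zero, smul_zero]
        | tmul x c =>
            rw [TensorProduct.smul_tmul', qk_tmul, qk_tmul, smul_comm]
        | add z₁ z₂ h₁ h₂ =>
            rw [smul_add, map_add, map_add, h₁, h₂, smul_add] }
  let ι' : X →ₗ[A] X ⊗[k] L :=
    { toFun := fun x => x ⊗ₜ[k] (1 : L)
      map_add' := fun x y => TensorProduct.add_tmul x y 1
      map_smul' := fun a x => (TensorProduct.smul_tmul' a x 1).symm }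
  have hqι : ∀ x : X, q (ι' x) = x := by
    intro x
    show qk (x ⊗ₜ[k] (1 : L)) = x
    rw [qk_tmul, hf1, one_smul]
  -- set up the factor maps indexed by Σ i, Fin (t i)
  let σι := Σ i : Fin m, Fin (t i)
  let M : σι → Type _ := fun j => Xi j.1
  let s : ∀ j : σι, X →ₗ[A] M j := fun j =>
    (LinearMap.proj j.2) ∘ₗ (LinearMap.proj j.1) ∘ₗ (e.toLinearMap ∘ₗ ι')
  let p : ∀ j : σι, M j →ₗ[A] X := fun j =>
    q ∘ₗ e.symm.toLinearMap ∘ₗ (LinearMap.single A _ j.1) ∘ₗ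
      (LinearMap.single A (fun _ : Fin (t j.1) => Xi j.1) j.2)
  have hsum : (∑ j ∈ (Finset.univ : Finset σι), (p j) ∘ₗ (s j)) = LinearMap.id := by
    ext x
    rw [LinearMap.sum_apply, LinearMap.id_apply]
    set w := e (ι' x) with hw
    have key : (∑ j : σι,
        (Pi.single j.1 (Pi.single j.2 (w j.1 j.2)) : ∀ i, Fin (t i) → Xi i)) = w := by
      rw [← Finset.univ_sigma_univ, Finset.sum_sigma]
      have h1 : ∀ i : Fin m, (∑ j2 : Fin (t i),
          (Pi.single i (Pi.single j2 (w i j2)) : ∀ i, Fin (t i) → Xi i))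
          = Pi.single i (w i) := by
        intro i
        have h2 : (fun j2 : Fin (t i) =>
            (Pi.single i (Pi.single j2 (w i j2)) : ∀ i, Fin (t i) → Xi i))
            = fun j2 => (LinearMap.single A (fun i => Fin (t i) → Xi i) i)
                (Pi.single j2 (w i j2)) := rfl
        rw [h2, ← map_sum, Finset.univ_sum_single]
        rfl
      rw [Finset.sum_congr rfl fun i _ => h1 i, Finset.univ_sum_single]
    have hterm : ∀ j : σι, ((p j) ∘ₗ (s j)) x
        = q (e.symm ((Pi.single j.1 (Pi.single j.2 (w j.1 j.2)) : ∀ i, Fin (t i) → Xi i))) :=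
      fun j => rfl
    calc ∑ j : σι, ((p j) ∘ₗ (s j)) x
        = ∑ j : σι, q (e.symm
            ((Pi.single j.1 (Pi.single j.2 (w j.1 j.2)) : ∀ i, Fin (t i) → Xi i))) :=
          Finset.sum_congr rfl fun j _ => hterm j
      _ = q (e.symm (∑ j : σι,
            (Pi.single j.1 (Pi.single j.2 (w j.1 j.2)) : ∀ i, Fin (t i) → Xi i))) := by
          rw [map_sum, map_sum]
      _ = q (e.symm w) := by rw [key]
      _ = x := by rw [hw, e.symm_apply_apply, hqι]
  obtain ⟨j, _, p', hp'⟩ := aux_summand (k := k) hXnt hXindec s Finset.univ p hsum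
  exact ⟨j.1, s j, p', hp'⟩
end

section
/- Let A be a finite-dimensional algebra over a field k, and let X₁ → X₂ → X₃ → ⋯ be a chain of monomorphisms of finite-dimensional A-modules. If X is a finite-dimensional indecomposable direct summand of X_i such that the composition X → X_i → X_j is a split monomorphism for all j ≥ i, then X is a direct summand of the colimit colim_j X_j, and consequently X_j ≅ X ⊕ X̃_j compatibly for all j ≥ i. -/
/-- Choose a thread through an `ℕ`-indexed inverse system of nonempty sets with
surjective transition maps. -/
private lemma chain_exists {α : ℕ → Type} (S : ∀ n, Set (α n)) (T : ∀ n, α (n+1) → α n)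
    (h0 : (S 0).Nonempty) (hsurj : ∀ n, ∀ x ∈ S n, ∃ y ∈ S (n+1), T n y = x) :
    ∃ c : ∀ n, α n, (∀ n, c n ∈ S n) ∧ ∀ n, T n (c (n+1)) = c n := by
  choose f hf1 hf2 using hsurj
  let c : ∀ n, {x // x ∈ S n} := fun n => Nat.rec ⟨h0.choose, h0.choose_spec⟩
      (fun n x => ⟨f n x.1 x.2, hf1 n x.1 x.2⟩) n
  exact ⟨fun n => (c n).1, fun n => (c n).2, fun n => hf2 n (c n).1 (c n).2⟩

/-- Key step: a compatible family of retractions exists. -/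
private theorem stmt18_aux {k A : Type} [Field k] [Ring A] [Algebra k A]
    (X : ℕ → Type) [∀ i, AddCommGroup (X i)] [∀ i, Module k (X i)]
    [∀ i, Module A (X i)] [∀ i, IsScalarTower k A (X i)]
    [∀ i, FiniteDimensional k (X i)]
    (F : ∀ i j, i ≤ j → (X i →ₗ[A] X j))
    (hFid : ∀ i (x : X i), F i i le_rfl x = x)
    (hFcomp : ∀ i j l (hij : i ≤ j) (hjl : j ≤ l) (x : X i),
      F j l hjl (F i j hij x) = F i l (hij.trans hjl) x)
    (Y : Type) [AddCommGroup Y] [Module k Y] [Module A Y] [IsScalarTower k A Y]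
    [FiniteDimensional k Y]
    (i₀ : ℕ) (s : Y →ₗ[A] X i₀)
    (hsplit : ∀ j (h : i₀ ≤ j), ∃ ρ : X j →ₗ[A] Y,
      ρ.comp ((F i₀ j h).comp s) = LinearMap.id) :
    ∃ φ : ∀ n, X (i₀ + n) →ₗ[A] Y,
      (∀ n y, φ n (F i₀ (i₀ + n) (Nat.le_add_right _ _) (s y)) = y) ∧
      (∀ m n (h : m ≤ n) x,
        φ n (F (i₀ + m) (i₀ + n) (by omega) x) = φ m x) := by
  haveI hfin : ∀ n : ℕ, FiniteDimensional k (X n →ₗ[A] Y) := fun n =>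
    FiniteDimensional.of_injective (LinearMap.restrictScalarsₗ k A (X n) Y k)
      (LinearMap.restrictScalars_injective k)
  -- transition maps on (Hom(X (i₀+n), Y) × k)
  let T : ∀ m n : ℕ, m ≤ n →
      ((X (i₀ + n) →ₗ[A] Y) × k) →ₗ[k] ((X (i₀ + m) →ₗ[A] Y) × k) :=
    fun m n h =>
    { toFun := fun p => (p.1.comp (F (i₀ + m) (i₀ + n) (by omega)), p.2)
      map_add' := fun p q => by
        refine Prod.ext ?_ rfl
        exact LinearMap.add_comp _ _ _
      map_smul' := fun c p => by
        refine Prod.ext ?_ rfl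
        exact LinearMap.smul_comp _ _ _ }
  have Tcomp : ∀ m n p (h1 : m ≤ n) (h2 : n ≤ p) x,
      T m n h1 (T n p h2 x) = T m p (h1.trans h2) x := by
    intro m n p h1 h2 x
    refine Prod.ext ?_ rfl
    refine LinearMap.ext fun z => ?_
    exact congrArg x.1 (hFcomp _ _ _ (by omega) (by omega) z)
  have Tself : ∀ m (h : m ≤ m) x, T m m h x = x := by
    intro m h x
    refine Prod.ext ?_ rfl
    refine LinearMap.ext fun z => ?_
    exact congrArg x.1 (hFid _ z)
  -- the "linearized retraction" subspaces
  let L : ∀ n : ℕ, Submodule k ((X (i₀ + n) →ₗ[A] Y) × k) := fun n =>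
    { carrier := {p | ∀ y : Y, p.1 (F i₀ (i₀ + n) (Nat.le_add_right _ _) (s y)) = p.2 • y}
      add_mem' := fun hp hq y => by
        simp only [Prod.fst_add, LinearMap.add_apply, Prod.snd_add, add_smul, hp y, hq y]
      zero_mem' := fun y => by simp
      smul_mem' := fun c p hp y => by
        simp only [Prod.smul_fst, Prod.smul_snd, LinearMap.smul_apply, hp y, smul_smul,
          smul_eq_mul] }
  have TL : ∀ m n (h : m ≤ n), ∀ x ∈ L n, T m n h x ∈ L m := by
    intro m n h x hx y
    show x.1 (F (i₀ + m) (i₀ + n) (by omega) (F i₀ (i₀ + m) (Nat.le_add_right _ _) (s y)))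
      = x.2 • y
    rw [hFcomp]
    exact hx y
  -- eventual images
  let E : ∀ m : ℕ, Submodule k ((X (i₀ + m) →ₗ[A] Y) × k) := fun m =>
    ⨅ d : ℕ, Submodule.map (T m (m + d) (Nat.le_add_right _ _)) (L (m + d))
  have Dmono : ∀ m n p (h1 : m ≤ n) (h2 : n ≤ p),
      Submodule.map (T m p (h1.trans h2)) (L p) ≤ Submodule.map (T m n h1) (L n) := by
    rintro m n p h1 h2 x ⟨z, hz, rfl⟩
    exact ⟨T n p h2 z, TL n p h2 z hz, Tcomp m n p h1 h2 z⟩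
  have Ele : ∀ m n (h : m ≤ n), E m ≤ Submodule.map (T m n h) (L n) := by
    intro m n h
    obtain ⟨d, rfl⟩ := Nat.exists_eq_add_of_le h
    exact iInf_le _ d
  have stab : ∀ m : ℕ, ∃ N, ∃ hN : m ≤ N, Submodule.map (T m N hN) (L N) = E m := by
    intro m
    obtain ⟨n₀, hn₀⟩ := IsArtinian.monotone_stabilizes (R := k)
      ⟨fun d => OrderDual.toDual
          (Submodule.map (T m (m + d) (Nat.le_add_right _ _)) (L (m + d))),
        fun d e hde => Dmono m (m + d) (m + e) (Nat.le_add_right _ _) (by omega)⟩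
    refine ⟨m + n₀, Nat.le_add_right _ _,
      le_antisymm (le_iInf fun d => ?_) (iInf_le _ n₀)⟩
    rcases le_total d n₀ with hd | hd
    · exact Dmono m (m + d) (m + n₀) (Nat.le_add_right _ _) (by omega)
    · exact le_of_eq (congrArg OrderDual.ofDual (hn₀ d hd))
  have Eone : ∀ m : ℕ, ∃ x, x ∈ E m ∧ x.2 = (1 : k) := by
    intro m
    obtain ⟨N, hN, hDE⟩ := stab m
    obtain ⟨ρ, hρ⟩ := hsplit (i₀ + N) (Nat.le_add_right _ _)
    have hρL : (ρ, (1 : k)) ∈ L N := by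
      intro y
      simpa using LinearMap.congr_fun hρ y
    exact ⟨T m N hN (ρ, 1), hDE ▸ ⟨(ρ, 1), hρL, rfl⟩, rfl⟩
  have Esurj : ∀ m n (h : m ≤ n), ∀ x ∈ E m, ∃ y ∈ E n, T m n h y = x := by
    intro m n h x hx
    obtain ⟨N, hN, hDE⟩ := stab n
    obtain ⟨z, hz, rfl⟩ := Ele m N (h.trans hN) hx
    exact ⟨T n N hN z, hDE ▸ ⟨z, hz, rfl⟩, Tcomp m n N h hN z⟩
  -- choose a compatible thread
  obtain ⟨c, hcS, hcT⟩ := chain_exists (fun n => {x | x ∈ E n ∧ x.2 = (1 : k)})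
      (fun n => T n (n+1) (Nat.le_succ n)) (Eone 0) (by
    rintro n x ⟨hx, hx1⟩
    obtain ⟨y, hy, hTy⟩ := Esurj n (n+1) (Nat.le_succ n) x hx
    refine ⟨y, ⟨hy, ?_⟩, hTy⟩
    have h2 := congrArg Prod.snd hTy
    exact h2.trans hx1)
  have hcomp : ∀ m n (h : m ≤ n), T m n h (c n) = c m := by
    intro m n h
    induction n, h using Nat.le_induction with
    | base => exact Tself m le_rfl (c m)
    | succ n hmn ih =>
      rw [← Tcomp m n (n+1) hmn (Nat.le_succ n), hcT n]
      exact ih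
  have hcL : ∀ n, c n ∈ L n := by
    intro n
    obtain ⟨z, hz, hzx⟩ :=
      iInf_le (fun d => Submodule.map (T n (n + d) (Nat.le_add_right _ _)) (L (n + d))) 0
        (hcS n).1
    have h0 : z = c n := (Tself n le_rfl z).symm.trans hzx
    exact h0 ▸ hz
  refine ⟨fun n => (c n).1, ?_, ?_⟩
  · intro n y
    have := hcL n y
    rw [(hcS n).2, one_smul] at this
    exact this
  · intro m n h x
    have h1 := congrArg Prod.fst (hcomp m n h)
    exact LinearMap.congr_fun h1 x

/-- Let `A` be a finite-dimensional algebra over a field `k` and let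
`X 0 → X 1 → X 2 → ⋯` be a chain of monomorphisms of finite-dimensional `A`-modules
(with transition maps `F i j`).  If `Y` is a finite-dimensional indecomposable direct
summand of `X i₀` (via `s`, `r`) such that the composite `Y → X i₀ → X j` is a split
monomorphism for all `j ≥ i₀`, then `Y` is a direct summand of the colimit
`colim_j X j`, and consequently `X j ≅ Y ⊕ X̃ j` compatibly for all `j ≥ i₀` (there is
a compatible family of complements). -/
theorem stmt18 {k A : Type} [Field k] [Ring A] [Algebra k A] [FiniteDimensional k A]
    (X : ℕ → Type) [∀ i, AddCommGroup (X i)] [∀ i, Module k (X i)]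
    [∀ i, Module A (X i)] [∀ i, IsScalarTower k A (X i)]
    [∀ i, FiniteDimensional k (X i)]
    (F : ∀ i j, i ≤ j → (X i →ₗ[A] X j))
    (hFid : ∀ i (x : X i), F i i le_rfl x = x)
    (hFcomp : ∀ i j l (hij : i ≤ j) (hjl : j ≤ l) (x : X i),
      F j l hjl (F i j hij x) = F i l (hij.trans hjl) x)
    (hmono : ∀ i j (h : i ≤ j), Function.Injective (F i j h))
    (Y : Type) [AddCommGroup Y] [Module k Y] [Module A Y] [IsScalarTower k A Y]
    [FiniteDimensional k Y]
    (hYnt : Nontrivial Y)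
    (hYindec : ∀ e : Y →ₗ[A] Y, e ∘ₗ e = e → e = 0 ∨ e = LinearMap.id)
    (i₀ : ℕ) (s : Y →ₗ[A] X i₀) (r : X i₀ →ₗ[A] Y)
    (hrs : r.comp s = LinearMap.id)
    (hsplit : ∀ j (h : i₀ ≤ j), ∃ ρ : X j →ₗ[A] Y,
      ρ.comp ((F i₀ j h).comp s) = LinearMap.id) :
    (∃ (s' : Y →ₗ[A] Module.DirectLimit X F)
        (p' : Module.DirectLimit X F →ₗ[A] Y),
      p'.comp s' = LinearMap.id) ∧
    ∃ C : ∀ j, Submodule A (X j),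
      (∀ j (h : i₀ ≤ j), IsCompl (LinearMap.range ((F i₀ j h).comp s)) (C j)) ∧
      (∀ j l (hjl : j ≤ l), i₀ ≤ j →
        Submodule.map (F j l hjl) (C j) ≤ C l) := by
  obtain ⟨φ, hφ1, hφ2⟩ := stmt18_aux (k := k) X F hFid hFcomp Y i₀ s hsplit
  set g : ∀ j, X j →ₗ[A] Y :=
    fun j => (φ j).comp (F j (i₀ + j) (Nat.le_add_left _ _)) with hgdef
  have Hg : ∀ i j (hij : i ≤ j) (x : X i), g j (F i j hij x) = g i x := by
    intro i j hij x
    show φ j (F j (i₀ + j) (Nat.le_add_left _ _) (F i j hij x))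
      = φ i (F i (i₀ + i) (Nat.le_add_left _ _) x)
    rw [hFcomp, ← hFcomp i (i₀ + i) (i₀ + j) (Nat.le_add_left _ _) (by omega)]
    exact hφ2 i j hij _
  have hret : ∀ j (h : i₀ ≤ j) (y : Y), g j (F i₀ j h (s y)) = y := by
    intro j h y
    rw [Hg i₀ j h (s y)]
    show φ i₀ (F i₀ (i₀ + i₀) (Nat.le_add_left _ _) (s y)) = y
    exact hφ1 i₀ y
  constructor
  · refine ⟨(Module.DirectLimit.of A ℕ X F i₀).comp s,
      Module.DirectLimit.lift A ℕ X F g Hg, ?_⟩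
    refine LinearMap.ext fun y => ?_
    rw [LinearMap.comp_apply, LinearMap.comp_apply, Module.DirectLimit.lift_of,
      LinearMap.id_apply]
    show φ i₀ (F i₀ (i₀ + i₀) (Nat.le_add_left _ _) (s y)) = y
    exact hφ1 i₀ y
  · refine ⟨fun j => LinearMap.ker (g j), ?_, ?_⟩
    · intro j h
      constructor
      · rw [Submodule.disjoint_def]
        intro x hx1 hx2
        obtain ⟨y, rfl⟩ := hx1
        have h1 : g j ((F i₀ j h).comp s y) = y := hret j h y
        have h2 : g j ((F i₀ j h).comp s y) = 0 := LinearMap.mem_ker.mp hx2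
        have hy0 : y = 0 := h1.symm.trans h2
        rw [hy0, map_zero]
      · rw [codisjoint_iff, eq_top_iff]
        intro x _
        have hmem : F i₀ j h (s (g j x)) ∈ LinearMap.range ((F i₀ j h).comp s) :=
          ⟨g j x, rfl⟩
        have hker : x - F i₀ j h (s (g j x)) ∈ LinearMap.ker (g j) := by
          rw [LinearMap.mem_ker, map_sub, hret j h (g j x), sub_self]
        have := Submodule.add_mem_sup hmem hker
        simpa using this
    · intro j l hjl _ x hx
      obtain ⟨z, hz, rfl⟩ := hx
      rw [LinearMap.mem_ker, Hg j l hjl z]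
      exact LinearMap.mem_ker.mp hz
end
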